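/- arXiv:2106.06318 — 6 statements merged into one kernel-verified Lean document; each statement's English description precedes it below -/
import Mathlib

section
/- Let T₁, T₂ be nonzero orthogonal quaternions of equal norm. Then q := T₂·T₁⁻¹ is a pure unit quaternion, and it depends only on the oriented plane spanned by (T₁, T₂): if (T₁', T₂') is another positively oriented orthogonal basis of the same plane with |T₁'| = |T₂'|, then T₂'·(T₁')⁻¹ = T₂·T₁⁻¹. -/
open Quaternion

/-- For nonzero orthogonal quaternions `T₁, T₂` of equal norm, `q = T₂·T₁⁻¹` is a pure unit
quaternion depending only on the oriented plane spanned by `(T₁, T₂)`: any other positively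
oriented orthogonal basis `(T₁', T₂')` of that plane with `‖T₁'‖ = ‖T₂'‖` (i.e. obtained from
`(T₁, T₂)` by a rotation of the plane and a positive scaling) yields the same quaternion. -/
theorem left_complex_structure_pure_unit_and_well_defined
    (T₁ T₂ T₁' T₂' : ℍ[ℝ]) (h1 : T₁ ≠ 0) (h2 : T₂ ≠ 0)
    (horth : (inner ℝ T₁ T₂ : ℝ) = 0) (hnorm : ‖T₁‖ = ‖T₂‖)
    (hbasis : ∃ l c s : ℝ, 0 < l ∧ c ^ 2 + s ^ 2 = 1 ∧
      T₁' = l • (c • T₁ + s • T₂) ∧ T₂' = l • ((-s) • T₁ + c • T₂)) :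
    (T₂ * T₁⁻¹).re = 0 ∧ ‖T₂ * T₁⁻¹‖ = 1 ∧ T₂' * T₁'⁻¹ = T₂ * T₁⁻¹ := by
  set q := T₂ * T₁⁻¹ with hq
  have hre : q.re = 0 := by
    rw [Quaternion.inner_def] at horth
    have hcomm : (T₂ * star T₁).re = (T₁ * star T₂).re := by
      simp [Quaternion.re_mul]; ring
    rw [hq, Quaternion.inv_def, mul_smul_comm, Quaternion.re_smul, hcomm, horth,
      smul_zero]
  have hnormq : ‖q‖ = 1 := by
    rw [hq, norm_mul, norm_inv, hnorm, mul_inv_cancel₀ (norm_ne_zero_iff.mpr h2)]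
  refine ⟨hre, hnormq, ?_⟩
  have hqT1 : q * T₁ = T₂ := by
    rw [hq, mul_assoc, inv_mul_cancel₀ h1, mul_one]
  have hsq : q * q = -1 := by
    have hstar : star q = -q := by
      ext <;> simp [hre]
    have h := Quaternion.self_mul_star q
    rw [hstar, mul_neg] at h
    have hns : Quaternion.normSq q = 1 := by
      have := Quaternion.normSq_eq_norm_mul_self q
      rw [hnormq] at this; simpa using this
    rw [hns] at h
    simpa using congrArg Neg.neg h
  have hqT2 : q * T₂ = -T₁ := by
    rw [← hqT1, ← mul_assoc, hsq, neg_one_mul]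
  obtain ⟨l, c, s, hl, hcs, h1', h2'⟩ := hbasis
  have hT1'ne : T₁' ≠ 0 := by
    intro h
    have : ‖T₁'‖ = 0 := by rw [h, norm_zero]
    rw [h1'] at this
    have hn2 : ‖c • T₁ + s • T₂‖ ^ 2 = c^2 * ‖T₁‖^2 + s^2 * ‖T₂‖^2 := by
      rw [norm_add_sq_real, inner_smul_left, inner_smul_right, horth]
      simp [norm_smul, mul_pow]
    rw [← hnorm] at hn2
    have : ‖c • T₁ + s • T₂‖ = 0 := by
      rw [norm_smul] at this
      rcases mul_eq_zero.mp this with h | h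
      · exact absurd h (ne_of_gt (abs_pos.mpr hl.ne'))
      · exact h
    rw [this] at hn2
    have hT1n : 0 < ‖T₁‖ := norm_pos_iff.mpr h1
    nlinarith [sq_nonneg c, sq_nonneg s]
  have key : q * T₁' = T₂' := by
    rw [h1', h2', mul_smul_comm, mul_add, mul_smul_comm, mul_smul_comm, hqT1, hqT2]
    congr 1
    rw [smul_neg, neg_smul]
    abel
  rw [← key, mul_assoc, mul_inv_cancel₀ hT1'ne, mul_one]
end

section
/- Let T₁, T₂ be nonzero orthogonal quaternions of equal norm, q_L = T₂·T₁⁻¹ and q_R = T₁⁻¹·T₂, and let N be the orthogonal complement of span(T₁,T₂) in ℍ. Then for every x ∈ N, q_L·x = −x·q_R. -/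
open Quaternion

lemma re_zero_anti {a : ℍ[ℝ]} (h : a.re = 0) : a = -star a := by
  have h2 := a.self_add_star'
  rw [h, mul_zero, Quaternion.coe_zero] at h2
  exact eq_neg_of_add_eq_zero_left h2

lemma re_comm (a b : ℍ[ℝ]) : (a * b).re = (b * a).re := by
  simp only [Quaternion.re_mul]; ring

/-- On the orthogonal complement `N` of the plane spanned by `T₁, T₂`, left multiplication
by `q_L = T₂·T₁⁻¹` equals minus right multiplication by `q_R = T₁⁻¹·T₂`. -/
theorem left_right_complex_structures_opposite_on_normal
    (T₁ T₂ : ℍ[ℝ]) (h1 : T₁ ≠ 0) (h2 : T₂ ≠ 0)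
    (horth : (inner ℝ T₁ T₂ : ℝ) = 0) (hnorm : ‖T₁‖ = ‖T₂‖) :
    ∀ x ∈ (Submodule.span ℝ {T₁, T₂})ᗮ,
      (T₂ * T₁⁻¹) * x = -(x * (T₁⁻¹ * T₂)) := by
  intro x hx
  have hx1 : (inner ℝ T₁ x : ℝ) = 0 := hx T₁ (Submodule.subset_span (by simp))
  have hx2 : (inner ℝ T₂ x : ℝ) = 0 := hx T₂ (Submodule.subset_span (by simp))
  rw [Quaternion.inner_def] at hx1 hx2 horth
  -- e1 : star T₁ * x = -(star x * T₁)
  have e1 : star T₁ * x = -(star x * T₁) := by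
    have hre : (star T₁ * x).re = 0 := by
      simp only [Quaternion.re_mul, Quaternion.re_star, Quaternion.imI_star,
        Quaternion.imJ_star, Quaternion.imK_star] at hx1 ⊢
      linarith
    have := re_zero_anti hre
    rwa [star_mul, star_star] at this
  -- e2 : x * star T₂ = -(T₂ * star x)
  have e2 : x * star T₂ = -(T₂ * star x) := by
    have hre : (x * star T₂).re = 0 := by
      simp only [Quaternion.re_mul, Quaternion.re_star, Quaternion.imI_star,
        Quaternion.imJ_star, Quaternion.imK_star] at hx2 ⊢
      linarith
    have := re_zero_anti hre
    rwa [star_mul, star_star] at this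
  -- e3 : star T₁ * T₂ = -(star T₂ * T₁)
  have e3 : star T₁ * T₂ = -(star T₂ * T₁) := by
    have hre : (star T₁ * T₂).re = 0 := by
      simp only [Quaternion.re_mul, Quaternion.re_star, Quaternion.imI_star,
        Quaternion.imJ_star, Quaternion.imK_star] at horth ⊢
      linarith
    have := re_zero_anti hre
    rwa [star_mul, star_star] at this
  have h2' : T₂ * star x = -(x * star T₂) := by rw [e2, neg_neg]
  have key : T₂ * star T₁ * x = -(x * (star T₁ * T₂)) := by
    rw [e3, mul_assoc, e1]
    simp only [mul_neg, neg_neg]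
    rw [← mul_assoc, h2']
    simp [mul_assoc]
  rw [Quaternion.inv_def]
  simp only [Algebra.mul_smul_comm, Algebra.smul_mul_assoc, ← smul_neg]
  rw [key]
end

section
/- Let X : U → ℍ be a conformal harmonic (minimal) immersion in isothermal coordinates (x,y) (so |X_x| = |X_y|, ⟨X_x,X_y⟩ = 0, X_xx + X_yy = 0), and define the right Gauss map g_R = X_x⁻¹·X_y. Then ∂g_R/∂y = −(∂g_R/∂x)·g_R. -/
open Quaternion

open ContinuousLinearMap

set_option maxHeartbeats 1000000 in
/-- For a conformal harmonic (minimal) immersion `X : U → ℍ` in isothermal coordinates,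
the right Gauss map `g_R = X_x⁻¹·X_y` satisfies `g_{R,y} = −g_{R,x}·g_R`. -/
theorem right_gauss_map_antiholomorphic
    (U : Set (ℝ × ℝ)) (hU : IsOpen U) (X : ℝ × ℝ → ℍ[ℝ])
    (hX : ContDiffOn ℝ (⊤ : ℕ∞) X U)
    (Xx Xy : ℝ × ℝ → ℍ[ℝ])
    (hXx : ∀ p, Xx p = fderiv ℝ X p (1, 0))
    (hXy : ∀ p, Xy p = fderiv ℝ X p (0, 1))
    (himm : ∀ p ∈ U, Xx p ≠ 0)
    (hconf1 : ∀ p ∈ U, ‖Xx p‖ = ‖Xy p‖)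
    (hconf2 : ∀ p ∈ U, (inner ℝ (Xx p) (Xy p) : ℝ) = 0)
    (hharm : ∀ p ∈ U, fderiv ℝ Xx p (1, 0) + fderiv ℝ Xy p (0, 1) = 0)
    (gR : ℝ × ℝ → ℍ[ℝ]) (hgR : ∀ p, gR p = (Xx p)⁻¹ * Xy p) :
    ∀ p ∈ U, fderiv ℝ gR p (0, 1) = -(fderiv ℝ gR p (1, 0) * gR p) := by
  intro p hp
  have hmem : U ∈ nhds p := hU.mem_nhds hp
  have hXp : ContDiffAt ℝ (⊤ : ℕ∞) X p := hX.contDiffAt hmem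
  have hFd : DifferentiableAt ℝ (fderiv ℝ X) p :=
    (hXp.fderiv_right (m := (⊤ : ℕ∞)) (by simp)).differentiableAt (by simp)
  set A := fderiv ℝ (fderiv ℝ X) p with hAdef
  set a := Xx p with ha
  set b := Xy p with hb
  have ha0 : a ≠ 0 := himm p hp
  -- derivatives of Xx and Xy at p
  have hXxD : HasFDerivAt Xx ((apply ℝ ℍ[ℝ] ((1:ℝ),(0:ℝ))).comp A) p := by
    have hfun : Xx = fun q => (apply ℝ ℍ[ℝ] ((1:ℝ),(0:ℝ))) (fderiv ℝ X q) := funext hXx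
    rw [hfun]
    exact ((apply ℝ ℍ[ℝ] ((1:ℝ),(0:ℝ))).hasFDerivAt).comp p hFd.hasFDerivAt
  have hXyD : HasFDerivAt Xy ((apply ℝ ℍ[ℝ] ((0:ℝ),(1:ℝ))).comp A) p := by
    have hfun : Xy = fun q => (apply ℝ ℍ[ℝ] ((0:ℝ),(1:ℝ))) (fderiv ℝ X q) := funext hXy
    rw [hfun]
    exact ((apply ℝ ℍ[ℝ] ((0:ℝ),(1:ℝ))).hasFDerivAt).comp p hFd.hasFDerivAt
  -- derivative of inverse of Xx
  have hinvD : HasFDerivAt (fun q => (Xx q)⁻¹)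
      ((-mulLeftRight ℝ ℍ[ℝ] a⁻¹ a⁻¹).comp ((apply ℝ ℍ[ℝ] ((1:ℝ),(0:ℝ))).comp A)) p :=
    (hasFDerivAt_inv' ha0).comp p hXxD
  -- derivative of gR
  have hgD : HasFDerivAt gR
      (a⁻¹ • ((apply ℝ ℍ[ℝ] ((0:ℝ),(1:ℝ))).comp A) +
        ((-mulLeftRight ℝ ℍ[ℝ] a⁻¹ a⁻¹).comp
          ((apply ℝ ℍ[ℝ] ((1:ℝ),(0:ℝ))).comp A)).smulRight b) p := by
    have hfun : gR = fun q => (fun q => (Xx q)⁻¹) q * Xy q := funext hgR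
    rw [hfun]
    exact hinvD.mul' hXyD
  -- symmetry of second derivatives and harmonicity
  have hsymm : A ((0:ℝ),(1:ℝ)) ((1:ℝ),(0:ℝ)) = A ((1:ℝ),(0:ℝ)) ((0:ℝ),(1:ℝ)) :=
    (hXp.isSymmSndFDerivAt (by rw [minSmoothness_of_isRCLikeNormedField]; exact WithTop.coe_le_coe.2 le_top)) _ _
  have hharm' : A ((1:ℝ),(0:ℝ)) ((1:ℝ),(0:ℝ)) = -(A ((0:ℝ),(1:ℝ)) ((0:ℝ),(1:ℝ))) := by
    have h := hharm p hp
    rw [hXxD.fderiv, hXyD.fderiv] at h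
    simpa [eq_neg_iff_add_eq_zero] using h
  -- the Gauss map squares to -1 by conformality
  have hgsq : (a⁻¹ * b) * (a⁻¹ * b) = -1 := by
    have hre : (a⁻¹ * b).re = 0 := by
      have h2 : (a * star b).re = 0 := hconf2 p hp
      have h3 : (star a * b).re = (a * star b).re := by simp [Quaternion.re_mul]
      rw [Quaternion.inv_def, smul_mul_assoc]
      simp [h3, h2]
    have hn : ‖a⁻¹ * b‖ = 1 := by
      rw [norm_mul, norm_inv, ← hconf1 p hp]
      field_simp [norm_ne_zero_iff.2 ha0]
      rfl
    have hs : star (a⁻¹ * b) = -(a⁻¹ * b) := Quaternion.star_eq_neg.2 hre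
    have hms := Quaternion.self_mul_star (a⁻¹ * b)
    rw [hs, mul_neg, Quaternion.normSq_eq_norm_mul_self, hn] at hms
    simpa [neg_eq_iff_eq_neg] using hms
  -- put everything together
  rw [hgD.fderiv, hgR p]
  simp only [ContinuousLinearMap.add_apply, ContinuousLinearMap.smul_apply,
    ContinuousLinearMap.comp_apply, ContinuousLinearMap.smulRight_apply,
    ContinuousLinearMap.neg_apply, ContinuousLinearMap.apply_apply,
    ContinuousLinearMap.mulLeftRight_apply, smul_eq_mul]
  rw [hsymm, hharm']
  set c := A ((1:ℝ),(0:ℝ)) ((0:ℝ),(1:ℝ)) with hc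
  set d := A ((0:ℝ),(1:ℝ)) ((0:ℝ),(1:ℝ)) with hd
  have expand : -((-(a⁻¹ * (-d) * a⁻¹) * b + a⁻¹ * c) * (a⁻¹ * b))
      = -(a⁻¹*d*(a⁻¹*b*(a⁻¹*b))) - a⁻¹*c*(a⁻¹*b) := by noncomm_ring
  calc a⁻¹ * d + -(a⁻¹ * c * a⁻¹) * b
      = -(a⁻¹ * c * a⁻¹) * b + a⁻¹ * d := by noncomm_ring
    _ = -((-(a⁻¹ * (-d) * a⁻¹) * b + a⁻¹ * c) * (a⁻¹ * b)) := by
        rw [expand, hgsq]; noncomm_ring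
    _ = -((a⁻¹ • c + -(a⁻¹ * -d * a⁻¹) * b) * (a⁻¹ * b)) := by
        rw [smul_eq_mul]; noncomm_ring
end

section
/- Let X : U → ℍ be a conformal harmonic immersion in isothermal coordinates and g_L = X_y·X_x⁻¹ the left Gauss map. Then ∂g_L/∂y = −g_L·(∂g_L/∂x). -/
set_option maxHeartbeats 1000000

open Quaternion

-- pure algebra lemma
lemma key_alg {R : Type*} [Ring R] (b ai u w : R)
    (hgg : (b * ai) * (b * ai) = -1) :
    b * -(ai * w * ai) + -u * ai =
      -((b * ai) * (b * -(ai * u * ai) + w * ai)) := by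
  have h2 : b * (ai * (b * (ai * (u * ai)))) = -(u * ai) := by
    have := congrArg (fun t => t * (u * ai)) hgg
    simpa [mul_assoc] using this
  simp only [mul_neg, neg_mul, mul_add, neg_add, mul_assoc, neg_neg]
  rw [h2]
  abel

-- purely imaginary unit quaternion squares to -1
lemma quat_sq_neg_one (a b : ℍ[ℝ]) (ha : a ≠ 0) (hn : ‖a‖ = ‖b‖)
    (hi : (inner ℝ a b : ℝ) = 0) : (b * a⁻¹) * (b * a⁻¹) = -1 := by
  set g := b * a⁻¹ with hg
  have hre : g.re = 0 := by
    have h1 : (b * star a).re = 0 := by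
      have h0 : (inner ℝ b a : ℝ) = 0 := (real_inner_comm b a).symm.trans hi
      rwa [Quaternion.inner_def] at h0
    rw [hg, Quaternion.inv_def, mul_smul_comm, Quaternion.re_smul, h1, smul_zero]
  have hstar : star g = -g := by
    ext <;> simp [hre]
  have hnorm : ‖g‖ = 1 := by
    rw [hg, norm_mul, norm_inv, ← hn, mul_inv_cancel₀ (norm_ne_zero_iff.mpr ha)]
  have := Quaternion.self_mul_star g
  rw [hstar, mul_neg] at this
  have hns : normSq g = 1 := by
    rw [Quaternion.normSq_eq_norm_mul_self, hnorm, one_mul]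
  rw [neg_eq_iff_eq_neg] at this
  rw [this, hns]
  norm_num

/-- For a conformal harmonic (minimal) immersion `X : U → ℍ` in isothermal coordinates,
the left Gauss map `g_L = X_y·X_x⁻¹` satisfies `g_{L,y} = −g_L·g_{L,x}`. -/
theorem left_gauss_map_antiholomorphic
    (U : Set (ℝ × ℝ)) (hU : IsOpen U) (X : ℝ × ℝ → ℍ[ℝ])
    (hX : ContDiffOn ℝ (⊤ : ℕ∞) X U)
    (Xx Xy : ℝ × ℝ → ℍ[ℝ])
    (hXx : ∀ p, Xx p = fderiv ℝ X p (1, 0))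
    (hXy : ∀ p, Xy p = fderiv ℝ X p (0, 1))
    (himm : ∀ p ∈ U, Xx p ≠ 0)
    (hconf1 : ∀ p ∈ U, ‖Xx p‖ = ‖Xy p‖)
    (hconf2 : ∀ p ∈ U, (inner ℝ (Xx p) (Xy p) : ℝ) = 0)
    (hharm : ∀ p ∈ U, fderiv ℝ Xx p (1, 0) + fderiv ℝ Xy p (0, 1) = 0)
    (gL : ℝ × ℝ → ℍ[ℝ]) (hgL : ∀ p, gL p = Xy p * (Xx p)⁻¹) :
    ∀ p ∈ U, fderiv ℝ gL p (0, 1) = -(gL p * fderiv ℝ gL p (1, 0)) := by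
  intro p hp
  have hXfun : Xx = fun q => fderiv ℝ X q (1, 0) := funext hXx
  have hYfun : Xy = fun q => fderiv ℝ X q (0, 1) := funext hXy
  have hgfun : gL = fun q => Xy q * (Xx q)⁻¹ := funext hgL
  have ha : Xx p ≠ 0 := himm p hp
  have hXc : ContDiffAt ℝ (⊤ : ℕ∞) X p := hX.contDiffAt (hU.mem_nhds hp)
  have hD1 : ContDiffAt ℝ 1 (fderiv ℝ X) p := hXc.fderiv_right (WithTop.coe_le_coe.mpr le_top)
  have hD2 : HasFDerivAt (fderiv ℝ X) (fderiv ℝ (fderiv ℝ X) p) p :=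
    (hD1.differentiableAt one_ne_zero).hasFDerivAt
  set D2 := fderiv ℝ (fderiv ℝ X) p with hD2def
  have hPx : HasFDerivAt Xx
      ((ContinuousLinearMap.apply ℝ ℍ[ℝ] ((1:ℝ), (0:ℝ))).comp D2) p := by
    rw [hXfun]
    exact (ContinuousLinearMap.apply ℝ ℍ[ℝ] ((1:ℝ), (0:ℝ))).hasFDerivAt.comp p hD2
  have hQy : HasFDerivAt Xy
      ((ContinuousLinearMap.apply ℝ ℍ[ℝ] ((0:ℝ), (1:ℝ))).comp D2) p := by
    rw [hYfun]
    exact (ContinuousLinearMap.apply ℝ ℍ[ℝ] ((0:ℝ), (1:ℝ))).hasFDerivAt.comp p hD2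
  have hsymm : D2 (0, 1) (1, 0) = D2 (1, 0) (0, 1) :=
    hXc.isSymmSndFDerivAt (by rw [minSmoothness_of_isRCLikeNormedField]; exact WithTop.coe_le_coe.mpr le_top) (0, 1) (1, 0)
  -- derivative of inverse of Xx
  have hinv : HasFDerivAt (fun q => (Xx q)⁻¹)
      ((-ContinuousLinearMap.mulLeftRight ℝ ℍ[ℝ] (Xx p)⁻¹ (Xx p)⁻¹).comp
        ((ContinuousLinearMap.apply ℝ ℍ[ℝ] ((1:ℝ), (0:ℝ))).comp D2)) p :=
    (hasFDerivAt_inv' ha).comp p hPx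
  have hgD : HasFDerivAt gL
      (Xy p • ((-ContinuousLinearMap.mulLeftRight ℝ ℍ[ℝ] (Xx p)⁻¹ (Xx p)⁻¹).comp
        ((ContinuousLinearMap.apply ℝ ℍ[ℝ] ((1:ℝ), (0:ℝ))).comp D2)) +
       ((ContinuousLinearMap.apply ℝ ℍ[ℝ] ((0:ℝ), (1:ℝ))).comp D2).smulRight ((Xx p)⁻¹)) p := by
    rw [hgfun]
    exact hQy.mul' hinv
  have hfg := hgD.fderiv
  -- directional values of fderiv Xx, Xy
  have hPx10 : fderiv ℝ Xx p (1, 0) = D2 (1, 0) (1, 0) := by rw [hPx.fderiv]; rfl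
  have hQy01 : fderiv ℝ Xy p (0, 1) = D2 (0, 1) (0, 1) := by rw [hQy.fderiv]; rfl
  have hharm' : D2 (1, 0) (1, 0) + D2 (0, 1) (0, 1) = 0 := by
    rw [← hPx10, ← hQy01]; exact hharm p hp
  rw [hfg, hgL p]
  simp only [ContinuousLinearMap.add_apply, ContinuousLinearMap.smul_apply,
    ContinuousLinearMap.comp_apply, ContinuousLinearMap.apply_apply,
    ContinuousLinearMap.neg_apply, ContinuousLinearMap.mulLeftRight_apply,
    ContinuousLinearMap.smulRight_apply, smul_eq_mul, smul_neg]
  -- now pure algebra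
  have hgg := quat_sq_neg_one (Xx p) (Xy p) ha (hconf1 p hp) (hconf2 p hp)
  rw [hsymm]
  have hsub : D2 (0, 1) (0, 1) = -D2 (1, 0) (1, 0) :=
    eq_neg_of_add_eq_zero_left (by rw [add_comm]; exact hharm')
  rw [hsub]
  exact key_alg (Xy p) (Xx p)⁻¹ (D2 (1, 0) (1, 0)) (D2 (1, 0) (0, 1)) hgg
end

section
/- Let X : U → ℍ be a conformal harmonic immersion in isothermal coordinates and g_L = X_y·X_x⁻¹. Then the quaternion X_xx + g_L·X_xy is orthogonal to both X_x and X_y, i.e. it is a normal vector to the immersed surface at each point. -/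
open Quaternion
open scoped ContDiff

private lemma quat0 (x y : ℍ[ℝ]) : (x * star y).re = (y * star x).re := by
  simp only [Quaternion.re_mul, Quaternion.re_star, Quaternion.imI_star, Quaternion.imJ_star,
    Quaternion.imK_star]
  ring

private lemma quat1 (a b C : ℍ[ℝ]) : (b * star a * C * star a).re
    = -(normSq a) * (C * star b).re + 2 * (b * star a).re * (C * star a).re := by
  simp only [Quaternion.re_mul, Quaternion.imI_mul, Quaternion.imJ_mul, Quaternion.imK_mul,
    Quaternion.re_star, Quaternion.imI_star, Quaternion.imJ_star, Quaternion.imK_star,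
    Quaternion.normSq_def']
  ring

private lemma quat2 (a b C : ℍ[ℝ]) : (b * star a * C * star b).re
    = normSq b * (C * star a).re := by
  simp only [Quaternion.re_mul, Quaternion.imI_mul, Quaternion.imJ_mul, Quaternion.imK_mul,
    Quaternion.re_star, Quaternion.imI_star, Quaternion.imJ_star, Quaternion.imK_star,
    Quaternion.normSq_def']
  ring

/-- For a conformal harmonic immersion `X : U → ℍ` with left Gauss map `g_L = X_y·X_x⁻¹`,
the quaternion `X_xx + g_L·X_xy` is orthogonal to `X_x` and `X_y`, i.e. it is normal to the
immersed surface. -/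
theorem second_form_combination_is_normal
    (U : Set (ℝ × ℝ)) (hU : IsOpen U) (X : ℝ × ℝ → ℍ[ℝ])
    (hX : ContDiffOn ℝ (⊤ : ℕ∞) X U)
    (Xx Xy Xxx Xxy : ℝ × ℝ → ℍ[ℝ])
    (hXx : ∀ p, Xx p = fderiv ℝ X p (1, 0))
    (hXy : ∀ p, Xy p = fderiv ℝ X p (0, 1))
    (hXxx : ∀ p, Xxx p = fderiv ℝ Xx p (1, 0))
    (hXxy : ∀ p, Xxy p = fderiv ℝ Xx p (0, 1))
    (E : ℝ × ℝ → ℝ) (hE : ∀ p, E p = ‖Xx p‖ ^ 2)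
    (himm : ∀ p ∈ U, 0 < E p)
    (hconf1 : ∀ p ∈ U, ‖Xx p‖ = ‖Xy p‖)
    (hconf2 : ∀ p ∈ U, (inner ℝ (Xx p) (Xy p) : ℝ) = 0)
    (hharm : ∀ p ∈ U, Xxx p + fderiv ℝ Xy p (0, 1) = 0)
    (gL : ℝ × ℝ → ℍ[ℝ]) (hgL : ∀ p, gL p = Xy p * (Xx p)⁻¹) :
    ∀ p ∈ U, (inner ℝ (Xxx p + gL p * Xxy p) (Xx p) : ℝ) = 0 ∧
      (inner ℝ (Xxx p + gL p * Xxy p) (Xy p) : ℝ) = 0 := by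
  intro p hp
  -- smoothness of the derivative functions
  have hXsm : ContDiffOn ℝ ∞ X U := hX.of_le (by simp)
  have hF : ContDiffOn ℝ ∞ (fderiv ℝ X) U :=
    ((contDiffOn_infty_iff_fderiv_of_isOpen hU).mp hXsm).2
  have hXxC : ContDiffOn ℝ ∞ Xx U := by
    have h := hF.clm_apply (contDiffOn_const (c := ((1 : ℝ), (0 : ℝ))))
    have : Xx = fun q => fderiv ℝ X q (1, 0) := funext hXx
    rw [this]; exact h
  have hXyC : ContDiffOn ℝ ∞ Xy U := by
    have h := hF.clm_apply (contDiffOn_const (c := ((0 : ℝ), (1 : ℝ))))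
    have : Xy = fun q => fderiv ℝ X q (0, 1) := funext hXy
    rw [this]; exact h
  have hmem : U ∈ nhds p := hU.mem_nhds hp
  have hXxd : DifferentiableAt ℝ Xx p :=
    (hXxC.differentiableOn (by simp)).differentiableAt hmem
  have hXyd : DifferentiableAt ℝ Xy p :=
    (hXyC.differentiableOn (by simp)).differentiableAt hmem
  have hyy : fderiv ℝ Xy p (0, 1) = -Xxx p := by
    exact eq_neg_of_add_eq_zero_right (hharm p hp)
  -- derivative of functions vanishing on U is zero
  have key : ∀ f : ℝ × ℝ → ℝ, (∀ q ∈ U, f q = 0) → fderiv ℝ f p = 0 := by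
    intro f hf
    have h : f =ᶠ[nhds p] fun _ => (0 : ℝ) := Filter.eventuallyEq_of_mem hmem hf
    rw [h.fderiv_eq]
    exact fderiv_const_apply 0
  -- identity I1 : ⟪Xxy, Xy⟫ = ⟪Xx, Xxx⟫
  have I1 : (inner ℝ (Xxy p) (Xy p) : ℝ) = inner ℝ (Xx p) (Xxx p) := by
    have h0 := key _ hconf2
    have h1 := fderiv_inner_apply (𝕜 := ℝ) hXxd hXyd ((0 : ℝ), (1 : ℝ))
    rw [h0, hyy, ← hXxy p, inner_neg_right] at h1
    simp only [ContinuousLinearMap.zero_apply] at h1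
    linarith
  -- identity I2 : ⟪Xxy, Xx⟫ = -⟪Xxx, Xy⟫
  have I2 : (inner ℝ (Xxy p) (Xx p) : ℝ) = -inner ℝ (Xxx p) (Xy p) := by
    have hz : ∀ q ∈ U, (inner ℝ (Xx q) (Xx q) : ℝ) - inner ℝ (Xy q) (Xy q) = 0 := by
      intro q hq
      rw [real_inner_self_eq_norm_sq, real_inner_self_eq_norm_sq, hconf1 q hq]
      ring
    have d1 : DifferentiableAt ℝ (fun q => (inner ℝ (Xx q) (Xx q) : ℝ)) p :=
      hXxd.inner (𝕜 := ℝ) hXxd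
    have d2 : DifferentiableAt ℝ (fun q => (inner ℝ (Xy q) (Xy q) : ℝ)) p :=
      hXyd.inner (𝕜 := ℝ) hXyd
    have h0 := key _ hz
    rw [fderiv_fun_sub d1 d2] at h0
    have h1 : fderiv ℝ (fun q => (inner ℝ (Xx q) (Xx q) : ℝ)) p ((0 : ℝ), (1 : ℝ))
        - fderiv ℝ (fun q => (inner ℝ (Xy q) (Xy q) : ℝ)) p ((0 : ℝ), (1 : ℝ)) = 0 := by
      rw [← ContinuousLinearMap.sub_apply, h0]; rfl
    rw [fderiv_inner_apply (𝕜 := ℝ) hXxd hXxd, fderiv_inner_apply (𝕜 := ℝ) hXyd hXyd,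
      hyy, ← hXxy p, inner_neg_right, inner_neg_left] at h1
    have c1 : (inner ℝ (Xx p) (Xxy p) : ℝ) = inner ℝ (Xxy p) (Xx p) := real_inner_comm _ _
    have c2 : (inner ℝ (Xy p) (Xxx p) : ℝ) = inner ℝ (Xxx p) (Xy p) := real_inner_comm _ _
    linarith
  -- set up the quaternion algebra
  set a := Xx p with ha
  set b := Xy p with hb
  set A := Xxx p with hA
  set C := Xxy p with hC
  have hapos : (0 : ℝ) < ‖a‖ ^ 2 := by rw [← hE p]; exact himm p hp
  have hane : a ≠ 0 := by
    intro h; rw [h] at hapos; simp at hapos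
  have hns : normSq a ≠ 0 := by
    have h : (0:ℝ) < normSq a := by
      rw [Quaternion.normSq_eq_norm_mul_self]; nlinarith
    exact h.ne'
  have hnsb : normSq b = normSq a := by
    rw [Quaternion.normSq_eq_norm_mul_self, Quaternion.normSq_eq_norm_mul_self,
      hconf1 p hp]
  have hgC : gL p * Xxy p = (normSq a)⁻¹ • (b * star a * C) := by
    rw [hgL p, Quaternion.inv_def]
    rw [mul_smul_comm, smul_mul_assoc]
  have hre0 : (b * star a).re = 0 := by
    have := hconf2 p hp
    rw [Quaternion.inner_def] at this
    rw [quat0]; exact this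
  have hI1' : (C * star b).re = (A * star a).re := by
    have := I1
    rw [Quaternion.inner_def, Quaternion.inner_def] at this
    rw [this, quat0]
  have hI2' : (C * star a).re = -(A * star b).re := by
    have := I2
    rw [Quaternion.inner_def, Quaternion.inner_def] at this
    rw [this]
  constructor
  · rw [hgC, inner_add_left, real_inner_smul_left, Quaternion.inner_def,
      Quaternion.inner_def, quat1, hre0, hI1']
    field_simp
    ring
  · rw [hgC, inner_add_left, real_inner_smul_left, Quaternion.inner_def,
      Quaternion.inner_def, quat2, hnsb, hI2']
    field_simp
    ring
end

section
/- With the notation of the Weierstrass representation, if e, f, g, h are holomorphic functions on a domain U ⊂ ℂ satisfying e'f' + g'h' = 0, then the map X(z) = e(z) + conj(f(z)) + (g(z) + conj(h(z)))·J from U to ℍ ≅ ℂ² is harmonic and conformal: writing z = x + iy, one has X_xx + X_yy = 0, |X_x| = |X_y|, and ⟨X_x, X_y⟩ = 0. -/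
open Quaternion

noncomputable section WeierstrassAux

/-- The real-linear identification `ℂ × ℂ ≃ ℍ`, `(z₁, z₂) ↦ z₁ + z₂ J`. -/
def Q2lin : ℂ × ℂ →ₗ[ℝ] ℍ[ℝ] where
  toFun p := ⟨p.1.re, p.1.im, p.2.re, p.2.im⟩
  map_add' a b := by ext <;> rfl
  map_smul' r a := by ext <;> simp only [Prod.smul_fst, Prod.smul_snd, Complex.smul_re, Complex.smul_im, RingHom.id_apply, smul_eq_mul] <;> rfl

def Q2 : ℂ × ℂ →L[ℝ] ℍ[ℝ] := Q2lin.toContinuousLinearMap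

@[simp] lemma Q2_apply (p : ℂ × ℂ) :
    Q2 p = (⟨p.1.re, p.1.im, p.2.re, p.2.im⟩ : ℍ[ℝ]) := rfl

/-- Multiplication by a complex number, as a real-linear continuous map. -/
def mulC (a : ℂ) : ℂ →L[ℝ] ℂ := (a • (1 : ℂ →L[ℂ] ℂ)).restrictScalars ℝ

@[simp] lemma mulC_apply (a v : ℂ) : mulC a v = a * v := by
  simp [mulC, smul_eq_mul]

def conjC : ℂ →L[ℝ] ℂ := (Complex.conjCLE : ℂ ≃L[ℝ] ℂ)

@[simp] lemma conjC_apply (v : ℂ) : conjC v = (starRingEnd ℂ) v := rfl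

lemma hasFDerivAt_mix {p q : ℂ → ℂ} {p' q' : ℂ} {z : ℂ}
    (hp : HasDerivAt p p' z) (hq : HasDerivAt q q' z) :
    HasFDerivAt (fun w => p w + (starRingEnd ℂ) (q w))
      (mulC p' + conjC.comp (mulC q')) z := by
  have h1 : HasFDerivAt p (mulC p') z := by
    have := hp.hasFDerivAt.restrictScalars ℝ
    exact this.congr_fderiv (by ext v; simp [mul_comm])
  have h2' : HasFDerivAt q (mulC q') z := by
    have := hq.hasFDerivAt.restrictScalars ℝ
    exact this.congr_fderiv (by ext v; simp [mul_comm])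
  have h2 : HasFDerivAt (fun w => (starRingEnd ℂ) (q w)) (conjC.comp (mulC q')) z :=
    conjC.hasFDerivAt.comp z h2'
  exact h1.add h2

lemma hasFDerivAt_Q2mix {p q r s : ℂ → ℂ} {p' q' r' s' : ℂ} {z : ℂ}
    (hp : HasDerivAt p p' z) (hq : HasDerivAt q q' z)
    (hr : HasDerivAt r r' z) (hs : HasDerivAt s s' z) :
    HasFDerivAt
      (fun w => Q2 (p w + (starRingEnd ℂ) (q w), r w + (starRingEnd ℂ) (s w)))
      (Q2.comp (((mulC p' + conjC.comp (mulC q'))).prod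
        ((mulC r' + conjC.comp (mulC s'))))) z :=
  Q2.hasFDerivAt.comp z ((hasFDerivAt_mix hp hq).prodMk (hasFDerivAt_mix hr hs))

end WeierstrassAux

/-- Weierstrass representation: if `e, f, g, h` are holomorphic on `U ⊆ ℂ` with
`e'f' + g'h' = 0`, then `X(z) = e(z) + conj(f(z)) + (g(z) + conj(h(z)))·J`, viewed as a map
to `ℍ ≅ ℂ²` (via `q = z₁ + z₂J`), is harmonic and conformal. -/
theorem weierstrass_representation_harmonic_conformal
    (U : Set ℂ) (hU : IsOpen U) (e f g h : ℂ → ℂ)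
    (he : DifferentiableOn ℂ e U) (hf : DifferentiableOn ℂ f U)
    (hg : DifferentiableOn ℂ g U) (hh : DifferentiableOn ℂ h U)
    (hW : ∀ z ∈ U, deriv e z * deriv f z + deriv g z * deriv h z = 0)
    (X : ℂ → ℍ[ℝ])
    (hXdef : ∀ z, X z =
      ⟨(e z + starRingEnd ℂ (f z)).re, (e z + starRingEnd ℂ (f z)).im,
       (g z + starRingEnd ℂ (h z)).re, (g z + starRingEnd ℂ (h z)).im⟩)
    (Xx Xy : ℂ → ℍ[ℝ])
    (hXx : ∀ z, Xx z = fderiv ℝ X z 1)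
    (hXy : ∀ z, Xy z = fderiv ℝ X z Complex.I) :
    ∀ z ∈ U, fderiv ℝ Xx z 1 + fderiv ℝ Xy z Complex.I = 0 ∧
      ‖Xx z‖ = ‖Xy z‖ ∧ (inner ℝ (Xx z) (Xy z) : ℝ) = 0 := by
  have hXfun : X = fun w =>
      Q2 (e w + starRingEnd ℂ (f w), g w + starRingEnd ℂ (h w)) := by
    funext w; rw [hXdef w]; rfl
  -- differentiability of everything at points of U
  have hde : AnalyticOnNhd ℂ (deriv e) U := (he.analyticOnNhd hU).deriv
  have hdf : AnalyticOnNhd ℂ (deriv f) U := (hf.analyticOnNhd hU).deriv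
  have hdg : AnalyticOnNhd ℂ (deriv g) U := (hg.analyticOnNhd hU).deriv
  have hdh : AnalyticOnNhd ℂ (deriv h) U := (hh.analyticOnNhd hU).deriv
  -- the fderiv of X at points of U
  have hXD : ∀ w ∈ U, HasFDerivAt X
      (Q2.comp (((mulC (deriv e w) + conjC.comp (mulC (deriv f w)))).prod
        ((mulC (deriv g w) + conjC.comp (mulC (deriv h w)))))) w := by
    intro w hw
    rw [hXfun]
    exact hasFDerivAt_Q2mix
      ((he.differentiableAt (hU.mem_nhds hw)).hasDerivAt)
      ((hf.differentiableAt (hU.mem_nhds hw)).hasDerivAt)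
      ((hg.differentiableAt (hU.mem_nhds hw)).hasDerivAt)
      ((hh.differentiableAt (hU.mem_nhds hw)).hasDerivAt)
  have hXxU : ∀ w ∈ U, Xx w =
      Q2 (deriv e w + starRingEnd ℂ (deriv f w),
          deriv g w + starRingEnd ℂ (deriv h w)) := by
    intro w hw
    rw [hXx w, (hXD w hw).fderiv]
    simp
    rfl
  have hXyU : ∀ w ∈ U, Xy w =
      Q2 (deriv e w * Complex.I + starRingEnd ℂ (deriv f w * Complex.I),
          deriv g w * Complex.I + starRingEnd ℂ (deriv h w * Complex.I)) := by
    intro w hw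
    rw [hXy w, (hXD w hw).fderiv]
    simp
    rfl
  intro z hz
  set a := deriv e z with ha
  set b := deriv f z with hb
  set c := deriv g z with hc
  set d := deriv h z with hd
  have hW1 : (a * b + c * d).re = 0 := by rw [hW z hz]; rfl
  have hW2 : (a * b + c * d).im = 0 := by rw [hW z hz]; rfl
  refine ⟨?_, ?_, ?_⟩
  · -- harmonicity
    have hEz : HasDerivAt (deriv e) (deriv (deriv e) z) z :=
      ((hde z hz).differentiableAt).hasDerivAt
    have hFz : HasDerivAt (deriv f) (deriv (deriv f) z) z :=
      ((hdf z hz).differentiableAt).hasDerivAt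
    have hGz : HasDerivAt (deriv g) (deriv (deriv g) z) z :=
      ((hdg z hz).differentiableAt).hasDerivAt
    have hHz : HasDerivAt (deriv h) (deriv (deriv h) z) z :=
      ((hdh z hz).differentiableAt).hasDerivAt
    have hYx : fderiv ℝ Xx z = fderiv ℝ (fun w =>
        Q2 (deriv e w + starRingEnd ℂ (deriv f w),
            deriv g w + starRingEnd ℂ (deriv h w))) z := by
      apply Filter.EventuallyEq.fderiv_eq
      exact Filter.eventuallyEq_of_mem (hU.mem_nhds hz) hXxU
    have hYy : fderiv ℝ Xy z = fderiv ℝ (fun w =>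
        Q2 (deriv e w * Complex.I + starRingEnd ℂ (deriv f w * Complex.I),
            deriv g w * Complex.I + starRingEnd ℂ (deriv h w * Complex.I))) z := by
      apply Filter.EventuallyEq.fderiv_eq
      exact Filter.eventuallyEq_of_mem (hU.mem_nhds hz) hXyU
    rw [hYx, hYy,
      (hasFDerivAt_Q2mix hEz hFz hGz hHz).fderiv,
      (hasFDerivAt_Q2mix (hEz.mul_const Complex.I) (hFz.mul_const Complex.I)
        (hGz.mul_const Complex.I) (hHz.mul_const Complex.I)).fderiv]
    simp only [ContinuousLinearMap.coe_comp', Function.comp_apply,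
      ContinuousLinearMap.prod_apply, ContinuousLinearMap.add_apply,
      mulC_apply, conjC_apply]
    rw [← map_add]
    convert map_zero Q2 using 2
    rw [Prod.ext_iff]
    constructor <;>
      (simp only [Prod.fst_add, Prod.snd_add, mul_one, mul_assoc, Complex.I_mul_I,
        mul_neg_one, map_neg, Prod.fst_zero, Prod.snd_zero]; ring)
  · -- conformality: norms
    rw [hXxU z hz, hXyU z hz, norm_eq_sqrt_real_inner,
      norm_eq_sqrt_real_inner, Quaternion.inner_self, Quaternion.inner_self]
    congr 1
    rw [Quaternion.normSq_def', Quaternion.normSq_def']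
    simp only [Q2_apply, Quaternion.normSq_def', Complex.add_re, Complex.add_im,
      Complex.conj_re, Complex.conj_im, Complex.mul_re, Complex.mul_im,
      Complex.I_re, Complex.I_im]
    have h1 : a.re * b.re - a.im * b.im + (c.re * d.re - c.im * d.im) = 0 := by
      simpa [Complex.add_re, Complex.mul_re] using hW1
    ring_nf
    nlinarith [h1]
  · -- conformality: orthogonality
    rw [hXxU z hz, hXyU z hz, Quaternion.inner_def]
    rw [Quaternion.re_mul, Quaternion.re_star, Quaternion.imI_star, Quaternion.imJ_star,
      Quaternion.imK_star]
    simp only [Q2_apply, Quaternion.re_mul, Quaternion.re_star, Quaternion.imI_star,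
      Quaternion.imJ_star, Quaternion.imK_star, Complex.add_re, Complex.add_im,
      Complex.conj_re, Complex.conj_im, Complex.mul_re, Complex.mul_im,
      Complex.I_re, Complex.I_im]
    have h2 : a.re * b.im + a.im * b.re + (c.re * d.im + c.im * d.re) = 0 := by
      simpa [Complex.add_im, Complex.mul_im] using hW2
    nlinarith [h2]
end
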